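/- arXiv:2411.17012 — 3 statements merged into one kernel-verified Lean document; each statement's English description precedes it below -/
import Mathlib

section
/- A finite directed graph G is closed if and only if every vertex v of G either lies on a directed cycle, or lies on a directed path whose initial vertex lies on some cycle and whose final vertex lies on some cycle, these two cycles being distinct. -/
set_option linter.unusedSectionVars false
set_option maxHeartbeats 1000000


/-- A finite directed graph (loops allowed): a finite vertex set and an
edge set contained in `verts × verts`. -/
structure FinDigraph (α : Type) [DecidableEq α] where
  verts : Finset α
  edges : Finset (α × α)
  edge_mem : ∀ e ∈ edges, e.1 ∈ verts ∧ e.2 ∈ verts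

variable {α β γ : Type} [DecidableEq α] [DecidableEq β] [DecidableEq γ]

/-- The edges of the closed walk determined by a list `[v₀, …, v_{n-1}]`:
`(v₀,v₁), (v₁,v₂), …, (v_{n-1},v₀)`. -/
def cycEdges (c : List α) : List (α × α) := c.zip (c.rotate 1)

/-- `c = [v₀, …, v_{n-1}]` (nonempty, distinct vertices) is a cycle of `G`:
all consecutive edges, including the wrap-around edge, lie in `G`.
A loop is the case `n = 1`. -/
def FinDigraph.IsCycle (G : FinDigraph α) (c : List α) : Prop :=
  c ≠ [] ∧ c.Nodup ∧ (∀ v ∈ c, v ∈ G.verts) ∧ ∀ e ∈ cycEdges c, e ∈ G.edges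

/-- A directed path in `G`: nonempty, distinct vertices, consecutive edges. -/
def FinDigraph.IsPath (G : FinDigraph α) (p : List α) : Prop :=
  p ≠ [] ∧ p.Nodup ∧ (∀ v ∈ p, v ∈ G.verts) ∧
    List.Chain' (fun u v => (u, v) ∈ G.edges) p

/-- `G` is closed: every vertex has an in-neighbour and an out-neighbour. -/
def FinDigraph.Closed (G : FinDigraph α) : Prop :=
  ∀ p ∈ G.verts, (∃ q, (q, p) ∈ G.edges) ∧ (∃ r, (p, r) ∈ G.edges)

/-- `H` is a subgraph of `G`. -/
def FinDigraph.Subgraph (H G : FinDigraph α) : Prop :=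
  H.verts ⊆ G.verts ∧ H.edges ⊆ G.edges

/-- The subgraph of `G` induced by a vertex set `S`. -/
def FinDigraph.induce (G : FinDigraph α) (S : Finset α) : FinDigraph α where
  verts := S ∩ G.verts
  edges := G.edges.filter (fun e => e.1 ∈ S ∧ e.2 ∈ S)
  edge_mem := by
    intro e he
    simp only [Finset.mem_filter] at he
    have h := G.edge_mem e he.1
    simp only [Finset.mem_inter]
    exact ⟨⟨he.2.1, h.1⟩, ⟨he.2.2, h.2⟩⟩

/-- The induced image `H[φ(C)]` of a cycle (or any list of vertices) `c`
of the source graph under a vertex map `φ`. -/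
def FinDigraph.inducedImage (H : FinDigraph β) (φ : α → β) (c : List α) : FinDigraph β :=
  H.induce (c.map φ).toFinset

/-- `φ` is a weak graph homomorphism `G → H`. -/
def IsWeakHom (φ : α → β) (G : FinDigraph α) (H : FinDigraph β) : Prop :=
  (∀ v ∈ G.verts, φ v ∈ H.verts) ∧
    ∀ e ∈ G.edges, φ e.1 ≠ φ e.2 → (φ e.1, φ e.2) ∈ H.edges

/-- `φ` preserves closure: the induced image of every cycle contains a cycle. -/
def PreservesClosure (φ : α → β) (G : FinDigraph α) (H : FinDigraph β) : Prop :=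
  ∀ c, G.IsCycle c → ∃ d, (H.inducedImage φ c).IsCycle d

/-- `φ` reflects closure: every cycle of `H` lies in the induced image of
some cycle of `G`. -/
def ReflectsClosure (φ : α → β) (G : FinDigraph α) (H : FinDigraph β) : Prop :=
  ∀ d, H.IsCycle d → ∃ c, G.IsCycle c ∧ (H.inducedImage φ c).IsCycle d

/-- The directed cycle graph on the list of vertices `c`. -/
def cycleGraph (c : List α) : FinDigraph α where
  verts := c.toFinset
  edges := (cycEdges c).toFinset
  edge_mem := by
    rintro ⟨a, b⟩ he
    simp only [List.mem_toFinset, cycEdges] at he ⊢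
    have h := List.of_mem_zip he
    exact ⟨h.1, (List.mem_rotate).mp h.2⟩

private lemma zip_tail_append : ∀ (l : List α) (h : l ≠ []) (x : α),
    l.zip (l.tail ++ [x]) = l.zip l.tail ++ [(l.getLast h, x)]
  | [a], _, x => by simp
  | a :: b :: t, _, x => by
    have ih := zip_tail_append (b :: t) (by simp) x
    have hg : (a :: b :: t).getLast (by simp) = (b :: t).getLast (by simp) :=
      List.getLast_cons (by simp)
    simp only [List.tail_cons] at ih ⊢
    rw [List.cons_append, List.zip_cons_cons, ih, List.zip_cons_cons, hg]
    simp

private lemma chain'_iff_zip {R : α → α → Prop} : ∀ {l : List α},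
    List.Chain' R l ↔ ∀ p ∈ l.zip l.tail, R p.1 p.2
  | [] => by simp [List.Chain']
  | [a] => by simp [List.Chain']
  | a :: b :: t => by
    rw [show List.Chain' R (a :: b :: t) ↔ R a b ∧ List.Chain' R (b :: t) from List.isChain_cons_cons, chain'_iff_zip (l := b :: t)]
    simp only [List.tail_cons, List.zip_cons_cons, List.mem_cons, forall_eq_or_imp]

lemma cycEdges_eq (c : List α) (h : c ≠ []) :
    cycEdges c = c.zip c.tail ++ [(c.getLast h, c.head h)] := by
  obtain ⟨a, t, rfl⟩ := List.exists_cons_of_ne_nil h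
  show (a :: t).zip ((a :: t).rotate 1) = _
  rw [show (1 : ℕ) = 0 + 1 from rfl, List.rotate_cons_succ, List.rotate_zero]
  rw [show t ++ [a] = (a :: t).tail ++ [(a :: t).head h] from by simp]
  exact zip_tail_append (a :: t) h _

lemma isCycle_iff (G : FinDigraph α) (c : List α) (h : c ≠ []) :
    G.IsCycle c ↔ c.Nodup ∧ (∀ v ∈ c, v ∈ G.verts) ∧
      List.Chain' (fun u v => (u, v) ∈ G.edges) c ∧
      (c.getLast h, c.head h) ∈ G.edges := by
  unfold FinDigraph.IsCycle
  rw [cycEdges_eq c h]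
  simp only [List.forall_mem_append, List.mem_singleton, forall_eq, h, true_and]
  rw [chain'_iff_zip]
  tauto

lemma isPath_infix {G : FinDigraph α} {p q : List α} (hp : G.IsPath p)
    (h : q <:+: p) (hq : q ≠ []) : G.IsPath q :=
  ⟨hq, hp.2.1.sublist h.sublist, fun v hv => hp.2.2.1 v (h.sublist.subset hv),
    hp.2.2.2.infix h⟩


lemma cycEdges_mem (l : List α) (i : Nat) (hi : i < l.length) :
    (l[i], (l.rotate 1)[i]'(by simpa using hi)) ∈ cycEdges l := by
  have hi' : i < (cycEdges l).length := by simp [cycEdges, List.length_zip]; omega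
  have h2 := List.getElem_zip (l := l) (l' := l.rotate 1) (i := i) (h := hi')
  have h3 := List.getElem_mem hi'
  rw [show (cycEdges l)[i] = (l.zip (l.rotate 1))[i]'hi' from rfl, h2] at h3
  exact h3

lemma cycle_out {G : FinDigraph α} {l : List α} (hc : G.IsCycle l) {v : α}
    (hv : v ∈ l) : ∃ w, (v, w) ∈ G.edges := by
  obtain ⟨i, hi, rfl⟩ := List.mem_iff_getElem.mp hv
  exact ⟨_, hc.2.2.2 _ (cycEdges_mem l i hi)⟩

lemma cycle_in {G : FinDigraph α} {l : List α} (hc : G.IsCycle l) {v : α}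
    (hv : v ∈ l) : ∃ u, (u, v) ∈ G.edges := by
  rw [← List.mem_rotate (n := 1)] at hv
  obtain ⟨i, hi, hvi⟩ := List.mem_iff_getElem.mp hv
  have hi' : i < l.length := by simpa using hi
  have := cycEdges_mem l i hi'
  have heq : (l.rotate 1)[i]'(by simpa using hi') = v := hvi
  rw [heq] at this
  exact ⟨_, hc.2.2.2 _ this⟩

lemma getLast_append_right {l l' : List α} (h : l' ≠ []) :
    (l ++ l').getLast (by simp [h]) = l'.getLast h := by
  rw [List.getLast_append]
  simp [h]

lemma head_append_left {l l' : List α} (h : l ≠ []) :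
    (l ++ l').head (by simp [h]) = l.head h := by
  rw [List.head_append]
  simp [h]

lemma forward_step {G : FinDigraph α} (hG : G.Closed) (X : Finset α) {v : α}
    (r : List α) (hr : G.IsPath r) (hh : r.head hr.1 = v) (hrX : ∀ u ∈ r, u ∉ X) :
    ((∃ cc, G.IsCycle cc ∧ (∀ u ∈ cc, u ∉ X) ∧ v ∈ cc) ∨
     (∃ p, ∃ hp : G.IsPath p, p.head hp.1 = v ∧ (∀ u ∈ p, u ∉ X) ∧
        ∃ x ∈ X, (p.getLast hp.1, x) ∈ G.edges) ∨
     (∃ p, ∃ hp : G.IsPath p, p.head hp.1 = v ∧ (∀ u ∈ p, u ∉ X) ∧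
        ∃ c₂, G.IsCycle c₂ ∧ (∀ u ∈ c₂, u ∉ X) ∧ p.getLast hp.1 ∈ c₂)) ∨
    (∃ z, z ∈ G.verts ∧ z ∉ r ∧ z ∉ X ∧
      ∃ hr' : G.IsPath (r ++ [z]), (r ++ [z]).head hr'.1 = v ∧
        (∀ u ∈ r ++ [z], u ∉ X)) := by
  have hrne := hr.1
  have hlastv := hr.2.2.1 _ (List.getLast_mem hrne)
  obtain ⟨z, hz⟩ := (hG _ hlastv).2
  have hzv : z ∈ G.verts := (G.edge_mem _ hz).2
  by_cases hzX : z ∈ X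
  · exact Or.inl (Or.inr (Or.inl ⟨r, hr, hh, hrX, z, hzX, hz⟩))
  by_cases hzr : z ∈ r
  · left
    obtain ⟨r₁, r₂, hsplit⟩ := List.append_of_mem hzr
    rcases r₁ with _ | ⟨a, r₁⟩
    · -- r = z :: r₂, cycle = r
      left
      refine ⟨r, (isCycle_iff G r hrne).mpr ⟨hr.2.1, hr.2.2.1, hr.2.2.2, ?_⟩, hrX, ?_⟩
      · have hhz : r.head hrne = z := by subst hsplit; simp
        rw [hhz]; exact hz
      · rw [← hh]; exact List.head_mem hrne
    · -- r = (a :: r₁) ++ z :: r₂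
      right; right
      have hpinf : ((a :: r₁) ++ [z]) <:+: r := ⟨[], r₂, by simp [hsplit]⟩
      have hp : G.IsPath ((a :: r₁) ++ [z]) := isPath_infix hr hpinf (by simp)
      have hsuf : (z :: r₂) <:+ r := ⟨a :: r₁, hsplit.symm⟩
      have hglr : (z :: r₂).getLast (by simp) = r.getLast hrne := by
        subst hsplit
        exact (getLast_append_right (by simp)).symm
      refine ⟨(a :: r₁) ++ [z], hp, ?_, fun u hu => hrX u (hpinf.sublist.subset hu),
        z :: r₂, ?_, fun u hu => hrX u (hsuf.sublist.subset hu), ?_⟩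
      · rw [← hh]
        have : r.head hrne = a := by subst hsplit; simp
        rw [this]; simp
      · refine (isCycle_iff G _ (by simp)).mpr
          ⟨hr.2.1.sublist hsuf.sublist, fun u hu => hr.2.2.1 u (hsuf.sublist.subset hu),
           hr.2.2.2.suffix hsuf, ?_⟩
        rw [hglr]; simpa using hz
      · have : ((a :: r₁) ++ [z]).getLast (by simp) = z := getLast_append_right (l := a :: r₁) (by simp)
        rw [this]; simp
  · right
    have hchain : List.Chain' (fun u w => (u, w) ∈ G.edges) (r ++ [z]) := by
      apply List.IsChain.append hr.2.2.2 (List.isChain_singleton z)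
      intro x hx y hy
      simp only [List.head?_cons, Option.mem_some_iff] at hy
      rw [List.getLast?_eq_getLast hrne, Option.mem_some_iff] at hx
      subst hx; subst hy; exact hz
    have hr' : G.IsPath (r ++ [z]) := by
      refine ⟨by simp, ?_, ?_, hchain⟩
      · simp [List.nodup_append, hr.2.1, hzr]; rintro a ha rfl; exact hzr ha
      · intro u hu
        rcases List.mem_append.mp hu with h | h
        · exact hr.2.2.1 u h
        · simp at h; subst h; exact hzv
    refine ⟨z, hzv, hzr, hzX, hr', ?_, ?_⟩
    · rw [head_append_left hrne]; exact hh
    · intro u hu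
      rcases List.mem_append.mp hu with h | h
      · exact hrX u h
      · simp at h; subst h; exact hzX

lemma card_helper {z : α} {s t : Finset α} (hz : z ∈ t) (hzs : z ∉ s) :
    (t \ insert z s).card < (t \ s).card := by
  apply Finset.card_lt_card
  rw [Finset.ssubset_iff_of_subset (Finset.sdiff_subset_sdiff le_rfl (Finset.subset_insert _ _))]
  exact ⟨z, by simp [hz, hzs], by simp⟩

lemma forward_lemma {G : FinDigraph α} (hG : G.Closed) (X : Finset α) {v : α} :
    ∀ (n : ℕ) (r : List α) (hr : G.IsPath r), r.head hr.1 = v → (∀ u ∈ r, u ∉ X) →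
      (G.verts \ r.toFinset).card ≤ n →
      ((∃ cc, G.IsCycle cc ∧ (∀ u ∈ cc, u ∉ X) ∧ v ∈ cc) ∨
       (∃ p, ∃ hp : G.IsPath p, p.head hp.1 = v ∧ (∀ u ∈ p, u ∉ X) ∧
          ∃ x ∈ X, (p.getLast hp.1, x) ∈ G.edges) ∨
       (∃ p, ∃ hp : G.IsPath p, p.head hp.1 = v ∧ (∀ u ∈ p, u ∉ X) ∧
          ∃ c₂, G.IsCycle c₂ ∧ (∀ u ∈ c₂, u ∉ X) ∧ p.getLast hp.1 ∈ c₂)) := by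
  intro n
  induction n with
  | zero =>
    intro r hr hh hrX hcard
    rcases forward_step hG X r hr hh hrX with h | ⟨z, hzv, hzr, hzX, hr', hh', hrX'⟩
    · exact h
    · exfalso
      have hmem : z ∈ G.verts \ r.toFinset := by simp [hzv, hzr]
      have := Finset.card_pos.mpr ⟨z, hmem⟩
      omega
  | succ n ih =>
    intro r hr hh hrX hcard
    rcases forward_step hG X r hr hh hrX with h | ⟨z, hzv, hzr, hzX, hr', hh', hrX'⟩
    · exact h
    · apply ih (r ++ [z]) hr' hh' hrX'
      have hlt := card_helper (s := r.toFinset) hzv (by simpa using hzr)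
      have heq : (r ++ [z]).toFinset = insert z r.toFinset := by ext u; simp [or_comm]
      rw [heq]; omega

lemma getLast_suffix {l r : List α} (h : l <:+ r) (hl : l ≠ []) (hr : r ≠ []) :
    l.getLast hl = r.getLast hr := by
  obtain ⟨t, rfl⟩ := h
  exact (getLast_append_right hl).symm

lemma backward_step {G : FinDigraph α} (hG : G.Closed) {v : α}
    (r : List α) (hr : G.IsPath r) (hl : r.getLast hr.1 = v) :
    ((∃ cc, G.IsCycle cc ∧ v ∈ cc) ∨
     (∃ X : Finset α, v ∉ X ∧
       (∀ x ∈ X, ∃ q, ∃ hq : G.IsPath q, q.head hq.1 = x ∧ q.getLast hq.1 = v ∧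
          ∀ u ∈ q, u ∈ X ∨ u = v) ∧
       ∃ c₁, G.IsCycle c₁ ∧ ∀ u ∈ c₁, u ∈ X)) ∨
    (∃ z, z ∈ G.verts ∧ z ∉ r ∧
      ∃ hr' : G.IsPath (z :: r), (z :: r).getLast hr'.1 = v) := by
  have hrne := hr.1
  have hheadv := hr.2.2.1 _ (List.head_mem hrne)
  obtain ⟨z, hz⟩ := (hG _ hheadv).1
  have hzv : z ∈ G.verts := (G.edge_mem _ hz).1
  by_cases hzr : z ∈ r
  · left
    obtain ⟨r₁, r₂, hsplit⟩ := List.append_of_mem hzr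
    by_cases hzvv : z = v
    · left
      refine ⟨r, (isCycle_iff G r hrne).mpr ⟨hr.2.1, hr.2.2.1, hr.2.2.2, ?_⟩, ?_⟩
      · rw [hl, ← hzvv]; exact hz
      · rw [← hl]; exact List.getLast_mem hrne
    · right
      have hsufz : (z :: r₂) <:+ r := ⟨r₁, hsplit.symm⟩
      have hprez : (r₁ ++ [z]) <+: r := ⟨r₂, by simp [hsplit]⟩
      have hvmem : v ∈ z :: r₂ := by
        rw [← hl, ← getLast_suffix hsufz (by simp) hrne]
        exact List.getLast_mem _
      have hdisj : List.Disjoint r₁ (z :: r₂) := by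
        have := hr.2.1
        rw [hsplit] at this
        exact List.disjoint_of_nodup_append this
      refine ⟨r.toFinset.erase v, by simp, ?_, r₁ ++ [z], ?_, ?_⟩
      · intro x hx
        rw [Finset.mem_erase, List.mem_toFinset] at hx
        obtain ⟨s₁, s₂, hs⟩ := List.append_of_mem hx.2
        have hsuf : (x :: s₂) <:+ r := ⟨s₁, hs.symm⟩
        refine ⟨x :: s₂, isPath_infix hr hsuf.isInfix (by simp), by simp, ?_, ?_⟩
        · rw [getLast_suffix hsuf (by simp) hrne]; exact hl
        · intro u hu
          by_cases huv : u = v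
          · exact Or.inr huv
          · exact Or.inl (Finset.mem_erase.mpr ⟨huv, List.mem_toFinset.mpr (hsuf.sublist.subset hu)⟩)
      · refine (isCycle_iff G _ (by simp)).mpr
          ⟨hr.2.1.sublist hprez.sublist, fun u hu => hr.2.2.1 u (hprez.sublist.subset hu),
           hr.2.2.2.prefix hprez, ?_⟩
        have h1 : (r₁ ++ [z]).getLast (by simp) = z := by
          rw [getLast_append_right (by simp)]; rfl
        have h2 : (r₁ ++ [z]).head (by simp) = r.head hrne := by
          rcases r₁ with _ | ⟨b, r₁⟩
          · subst hsplit; simp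
          · subst hsplit; simp
        rw [h1, h2]; exact hz
      · intro u hu
        rw [Finset.mem_erase, List.mem_toFinset]
        refine ⟨?_, hprez.sublist.subset hu⟩
        rcases List.mem_append.mp hu with h | h
        · intro huv; subst huv; exact hdisj h hvmem
        · simp at h; subst h; exact hzvv
  · right
    have hchain : List.Chain' (fun u w => (u, w) ∈ G.edges) (z :: r) := by
      show List.IsChain _ (z :: r); rw [List.isChain_cons]
      refine ⟨?_, hr.2.2.2⟩
      intro y hy
      rw [List.head?_eq_head hrne, Option.mem_some_iff] at hy
      subst hy; exact hz
    have hr' : G.IsPath (z :: r) :=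
      ⟨by simp, List.nodup_cons.mpr ⟨hzr, hr.2.1⟩, by
        intro u hu
        rcases List.mem_cons.mp hu with h | h
        · subst h; exact hzv
        · exact hr.2.2.1 u h, hchain⟩
    refine ⟨z, hzv, hzr, hr', ?_⟩
    rw [List.getLast_cons hrne]; exact hl

lemma backward_lemma {G : FinDigraph α} (hG : G.Closed) {v : α} :
    ∀ (n : ℕ) (r : List α) (hr : G.IsPath r), r.getLast hr.1 = v →
      (G.verts \ r.toFinset).card ≤ n →
      ((∃ cc, G.IsCycle cc ∧ v ∈ cc) ∨
       (∃ X : Finset α, v ∉ X ∧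
         (∀ x ∈ X, ∃ q, ∃ hq : G.IsPath q, q.head hq.1 = x ∧ q.getLast hq.1 = v ∧
            ∀ u ∈ q, u ∈ X ∨ u = v) ∧
         ∃ c₁, G.IsCycle c₁ ∧ ∀ u ∈ c₁, u ∈ X)) := by
  intro n
  induction n with
  | zero =>
    intro r hr hl hcard
    rcases backward_step hG r hr hl with h | ⟨z, hzv, hzr, hr', hl'⟩
    · exact h
    · exfalso
      have hmem : z ∈ G.verts \ r.toFinset := by simp [hzv, hzr]
      have := Finset.card_pos.mpr ⟨z, hmem⟩
      omega
  | succ n ih =>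
    intro r hr hl hcard
    rcases backward_step hG r hr hl with h | ⟨z, hzv, hzr, hr', hl'⟩
    · exact h
    · apply ih (z :: r) hr' hl'
      have hlt := card_helper (s := r.toFinset) hzv (by simpa using hzr)
      have heq : (z :: r).toFinset = insert z r.toFinset := by simp
      rw [heq]; omega

lemma getLast_tail {p : List α} (h : p.tail ≠ []) :
    p.tail.getLast h = p.getLast (by intro e; simp [e] at h) := by
  rcases p with _ | ⟨a, t⟩
  · simp at h
  · simp only [List.tail_cons] at h ⊢
    exact (List.getLast_cons h).symm

lemma getLast_eq_head_of_tail_nil {p : List α} (hp : p ≠ []) (h : p.tail = []) :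
    p.getLast hp = p.head hp := by
  rcases p with _ | ⟨a, t⟩
  · simp at hp
  · simp only [List.tail_cons] at h
    subst h
    simp

lemma glue {G : FinDigraph α} {q p : List α} {v : α} {X : Finset α}
    (hq : G.IsPath q) (hp : G.IsPath p)
    (hql : q.getLast hq.1 = v) (hph : p.head hp.1 = v)
    (hqmem : ∀ u ∈ q, u ∈ X ∨ u = v) (hpX : ∀ u ∈ p, u ∉ X) :
    ∃ hP : G.IsPath (q ++ p.tail),
      (q ++ p.tail).head hP.1 = q.head hq.1 ∧
      (q ++ p.tail).getLast hP.1 = p.getLast hp.1 := by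
  have hqne := hq.1
  have hpne := hp.1
  have hpcons : p = v :: p.tail := by rw [← hph]; exact (List.cons_head_tail hpne).symm
  have hvtail : v ∉ p.tail := by
    have h2 := hp.2.1
    rw [hpcons] at h2
    exact (List.nodup_cons.mp h2).1
  have hdisj : List.Disjoint q p.tail := by
    intro u hu hut
    have hup : u ∈ p := by rw [hpcons]; exact List.mem_cons_of_mem _ hut
    rcases hqmem u hu with h | h
    · exact hpX u hup h
    · subst h; exact hvtail hut
  have hchain : List.Chain' (fun u w => (u, w) ∈ G.edges) (q ++ p.tail) := by
    apply List.IsChain.append hq.2.2.2 hp.2.2.2.tail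
    intro x hx y hy
    rw [List.getLast?_eq_getLast hqne, Option.mem_some_iff] at hx
    subst hx
    rw [hql]
    have h3 := hp.2.2.2
    rw [hpcons] at h3
    exact (List.isChain_cons.mp h3).1 y hy
  have hP : G.IsPath (q ++ p.tail) := by
    refine ⟨by simp [hqne], ?_, ?_, hchain⟩
    · exact List.nodup_append'.mpr ⟨hq.2.1, hp.2.1.tail, hdisj⟩
    · intro u hu
      rcases List.mem_append.mp hu with h | h
      · exact hq.2.2.1 u h
      · exact hp.2.2.1 u (by rw [hpcons]; exact List.mem_cons_of_mem _ h)
  refine ⟨hP, head_append_left hqne, ?_⟩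
  by_cases htail : p.tail = []
  · have e1 : q ++ p.tail = q := by rw [htail, List.append_nil]
    have e2 : (q ++ p.tail).getLast hP.1 = q.getLast hqne := by
      congr 1 <;> simp [e1]
    rw [e2, hql, getLast_eq_head_of_tail_nil hpne htail, hph]
  · rw [getLast_append_right htail]
    exact getLast_tail htail

/-- classification of closed digraphs — `G` is closed iff every
vertex lies on a cycle, or on a directed path whose initial and final vertices
lie on two distinct cycles. -/
theorem closed_iff_cycle_or_path_between_cycles (G : FinDigraph α) :
    G.Closed ↔
    ∀ v ∈ G.verts,
      (∃ c, G.IsCycle c ∧ v ∈ c) ∨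
      (∃ p, ∃ hp : G.IsPath p, v ∈ p ∧
        ∃ c₁ c₂, G.IsCycle c₁ ∧ G.IsCycle c₂ ∧ cycleGraph c₁ ≠ cycleGraph c₂ ∧
          p.head hp.1 ∈ c₁ ∧ p.getLast hp.1 ∈ c₂) := by
  constructor
  · intro hG v hv
    have hpathv : G.IsPath [v] := ⟨by simp, by simp, by simp [hv], List.isChain_singleton v⟩
    rcases backward_lemma hG (v := v) ((G.verts \ ([v] : List α).toFinset).card) [v] hpathv
        (by simp) le_rfl with ⟨cc, hcc, hvcc⟩ | ⟨X, hvX, hqprop, c₁, hc₁, hc₁X⟩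
    · exact Or.inl ⟨cc, hcc, hvcc⟩
    · rcases forward_lemma hG X (v := v) ((G.verts \ ([v] : List α).toFinset).card) [v] hpathv
          (by simp) (by simpa using hvX) le_rfl with
        ⟨cc, hcc, _, hvcc⟩ | ⟨p, hp, hph, hpX, x, hxX, hedge⟩ |
        ⟨p, hp, hph, hpX, c₂, hc₂, hc₂X, hplast⟩
      · exact Or.inl ⟨cc, hcc, hvcc⟩
      · -- build a cycle through v
        obtain ⟨qq, hqq, hqh, hql, hqm⟩ := hqprop x hxX
        obtain ⟨hP, hPh, hPl⟩ := glue hqq hp hql hph hqm hpX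
        left
        refine ⟨qq ++ p.tail, (isCycle_iff G _ hP.1).mpr
          ⟨hP.2.1, hP.2.2.1, hP.2.2.2, ?_⟩, ?_⟩
        · rw [hPl, hPh, hqh]; exact hedge
        · apply List.mem_append_left
          rw [← hql]; exact List.getLast_mem hqq.1
      · obtain ⟨a, hac₁⟩ : ∃ a, a ∈ c₁ := ⟨c₁.head hc₁.1, List.head_mem hc₁.1⟩
        have haX : a ∈ X := hc₁X a hac₁
        obtain ⟨qq, hqq, hqh, hql, hqm⟩ := hqprop a haX
        obtain ⟨hP, hPh, hPl⟩ := glue hqq hp hql hph hqm hpX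
        right
        refine ⟨qq ++ p.tail, hP, ?_, c₁, c₂, hc₁, hc₂, ?_, ?_, ?_⟩
        · apply List.mem_append_left
          rw [← hql]; exact List.getLast_mem hqq.1
        · intro hEq
          have hverts : c₁.toFinset = c₂.toFinset := congrArg FinDigraph.verts hEq
          have : a ∈ c₂ := List.mem_toFinset.mp (hverts ▸ List.mem_toFinset.mpr hac₁)
          exact hc₂X a this haX
        · rw [hPh, hqh]; exact hac₁
        · rw [hPl]; exact hplast
  · intro h v hv
    rcases h v hv with ⟨c, hc, hvc⟩ | ⟨p, hp, hvp, c₁, c₂, hc₁, hc₂, _, hh1, hl2⟩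
    · exact ⟨cycle_in hc hvc, cycle_out hc hvc⟩
    · obtain ⟨l₁, l₂, hsplit⟩ := List.append_of_mem hvp
      subst hsplit
      constructor
      · rcases l₁ with _ | ⟨b, l₁⟩
        · simp only [List.nil_append, List.head_cons] at hh1
          exact cycle_in hc₁ hh1
        · have hchain := hp.2.2.2
          replace hchain := List.isChain_append.mp hchain
          refine ⟨(b :: l₁).getLast (by simp), hchain.2.2 _ ?_ v ?_⟩
          · rw [List.getLast?_eq_getLast (l := b :: l₁) (by simp)]; rfl
          · rfl
      · rcases l₂ with _ | ⟨y, l₂⟩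
        · have hlast : ((l₁ ++ [v]).getLast (by simp)) = v := by
            rw [getLast_append_right (by simp)]; rfl
          rw [show (l₁ ++ [v]).getLast hp.1 = v from hlast] at hl2
          exact cycle_out hc₂ hl2
        · have hchain := hp.2.2.2.suffix (⟨l₁, rfl⟩ : (v :: y :: l₂) <:+ (l₁ ++ v :: y :: l₂))
          exact ⟨y, (List.isChain_cons_cons.mp hchain).1⟩
end

section
/- Let φ : G → H be a weak graph homomorphism of directed graphs. Then φ preserves closure if and only if for every cycle C in G, either the induced image H[φ(C)] has more than one vertex, or H[φ(C)] is a graph consisting of a single vertex with a loop on it. -/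
variable {α β γ : Type} [DecidableEq α] [DecidableEq β] [DecidableEq γ]

set_option linter.unusedSectionVars false

lemma mem_cycEdges_iff {l : List α} {e : α × α} :
    e ∈ cycEdges l ↔ ∃ i, ∃ h : i < l.length,
      e = (l[i], l[(i + 1) % l.length]'(Nat.mod_lt _ (by omega))) := by
  rw [cycEdges, List.mem_iff_getElem]
  constructor
  · rintro ⟨i, h, rfl⟩
    have hi : i < l.length := by simpa using h
    refine ⟨i, hi, ?_⟩
    rw [List.getElem_zip, List.getElem_rotate]
  · rintro ⟨i, hi, rfl⟩
    refine ⟨i, by simpa using hi, ?_⟩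
    rw [List.getElem_zip, List.getElem_rotate]

lemma cycle_of_path_closes (G : FinDigraph α) (p : List α) (hp : p ≠ []) (hnd : p.Nodup)
    (hv : ∀ v ∈ p, v ∈ G.verts) (hch : List.Chain' (fun u v => (u, v) ∈ G.edges) p)
    (r : α) (hr : r ∈ p) (he : (p.getLast hp, r) ∈ G.edges) : ∃ c, G.IsCycle c := by
  obtain ⟨s, t, rfl⟩ := List.append_of_mem hr
  refine ⟨r :: t, by simp, ?_, ?_, ?_⟩
  · exact (List.nodup_append.mp hnd).2.1
  · intro v hvmem
    exact hv v (by simp [hvmem])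
  · intro e he'
    rw [mem_cycEdges_iff] at he'
    obtain ⟨i, hi, rfl⟩ := he'
    simp only [List.length_cons] at hi
    rcases Nat.lt_or_ge (i + 1) (t.length + 1) with hlt | hge
    · have hmod : (i + 1) % (r :: t).length = i + 1 := by
        rw [List.length_cons]; exact Nat.mod_eq_of_lt (by omega)
      have hch' : List.Chain' (fun u v => (u, v) ∈ G.edges) (r :: t) :=
        hch.suffix ⟨s, rfl⟩
      unfold List.Chain' at hch'; rw [List.isChain_iff_getElem] at hch'
      have := hch' i (by simp only [List.length_cons]; omega)
      simp only [hmod]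
      exact this
    · have hieq : i = t.length := by omega
      subst hieq
      have hmod : (t.length + 1) % (r :: t).length = 0 := by
        rw [List.length_cons]; exact Nat.mod_self _
      have hlast : (r :: t)[t.length] = (s ++ r :: t).getLast hp := by
        rw [List.getLast_append hp]
        simp [List.getLast_eq_getElem]
      simp only [hmod, hlast]
      simpa using he

lemma exists_cycle_of_out (G : FinDigraph α) (hne : G.verts.Nonempty)
    (hout : ∀ p ∈ G.verts, ∃ r, (p, r) ∈ G.edges) : ∃ c, G.IsCycle c := by
  obtain ⟨v₀, hv₀⟩ := hne
  suffices h : ∀ k (p : List α) (hp : p ≠ []), p.Nodup → (∀ v ∈ p, v ∈ G.verts) →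
      List.Chain' (fun u v => (u, v) ∈ G.edges) p → G.verts.card ≤ p.length + k →
      ∃ c, G.IsCycle c by
    exact h G.verts.card [v₀] (by simp) (by simp) (by simpa) (List.isChain_singleton _) (by simp)
  intro k
  induction k with
  | zero =>
    intro p hp hnd hv hch hcard
    obtain ⟨r, hr⟩ := hout (p.getLast hp) (hv _ (List.getLast_mem hp))
    have hrp : r ∈ p := by
      have h1 : p.toFinset ⊆ G.verts := fun x hx => hv x (List.mem_toFinset.mp hx)
      have h2 : G.verts.card ≤ p.toFinset.card := by
        rw [List.toFinset_card_of_nodup hnd]; omega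
      have := Finset.eq_of_subset_of_card_le h1 h2
      rw [← List.mem_toFinset, this]
      exact (G.edge_mem _ hr).2
    exact cycle_of_path_closes G p hp hnd hv hch r hrp hr
  | succ k ih =>
    intro p hp hnd hv hch hcard
    obtain ⟨r, hr⟩ := hout (p.getLast hp) (hv _ (List.getLast_mem hp))
    by_cases hrp : r ∈ p
    · exact cycle_of_path_closes G p hp hnd hv hch r hrp hr
    · refine ih (p ++ [r]) (by simp) ?_ ?_ ?_ (by simp; omega)
      · simp [List.nodup_append, hnd, hrp]
        exact fun a ha h => hrp (h ▸ ha)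
      · intro v hvmem
        rcases List.mem_append.mp hvmem with h | h
        · exact hv v h
        · simp only [List.mem_singleton] at h
          subst h
          exact (G.edge_mem _ hr).2
      · exact List.IsChain.append hch (by simp) (by
          intro x hx y hy
          simp only [List.head?_cons, Option.mem_def, Option.some.injEq] at hy
          rw [List.getLast?_eq_getLast hp, Option.mem_def, Option.some.injEq] at hx
          subst hx; subst hy; exact hr)


lemma mem_inducedImage_verts {H : FinDigraph β} {φ : α → β} {c : List α} {w : β} :
    w ∈ (H.inducedImage φ c).verts ↔ (∃ u ∈ c, φ u = w) ∧ w ∈ H.verts := by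
  simp [FinDigraph.inducedImage, FinDigraph.induce]

lemma mem_inducedImage_edges {H : FinDigraph β} {φ : α → β} {c : List α} {e : β × β} :
    e ∈ (H.inducedImage φ c).edges ↔
      e ∈ H.edges ∧ (∃ u ∈ c, φ u = e.1) ∧ (∃ u ∈ c, φ u = e.2) := by
  simp [FinDigraph.inducedImage, FinDigraph.induce]

/-- preservation test: a weak graph homomorphism preserves
closure iff for every cycle `C` of `G` the induced image `H[φ(C)]` has more
than one vertex, or is a single vertex with a loop. -/
theorem preservation_test (G : FinDigraph α) (H : FinDigraph β) (φ : α → β)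
    (hφ : IsWeakHom φ G H) :
    PreservesClosure φ G H ↔
    ∀ c, G.IsCycle c →
      1 < (H.inducedImage φ c).verts.card ∨
      (∃ v, (H.inducedImage φ c).verts = {v} ∧
        (H.inducedImage φ c).edges = {(v, v)}) := by
  constructor
  · intro hpres c hc
    obtain ⟨d, hdne, hdnd, hdv, hde⟩ := hpres c hc
    by_cases hcard : 1 < (H.inducedImage φ c).verts.card
    · exact Or.inl hcard
    · right
      have hne : (H.inducedImage φ c).verts.Nonempty := by
        obtain ⟨x, hx⟩ := List.exists_mem_of_ne_nil d hdne
        exact ⟨x, hdv x hx⟩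
      have h1 : (H.inducedImage φ c).verts.card = 1 := by
        have := Finset.card_pos.mpr hne; omega
      obtain ⟨v, hv⟩ := Finset.card_eq_one.mp h1
      refine ⟨v, hv, ?_⟩
      have hvert : ∀ e ∈ (H.inducedImage φ c).edges, e.1 = v ∧ e.2 = v := by
        intro e he
        have h := (H.inducedImage φ c).edge_mem e he
        rw [hv] at h
        simpa using h
      ext e
      simp only [Finset.mem_singleton]
      constructor
      · intro he
        obtain ⟨h1', h2'⟩ := hvert e he
        obtain ⟨a, b⟩ := e
        simp_all
      · rintro rfl
        have hd0 : 0 < d.length := List.length_pos_iff.mpr hdne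
        have hmem : (d[0], d[(0 + 1) % d.length]'(Nat.mod_lt _ hd0)) ∈ cycEdges d :=
          mem_cycEdges_iff.mpr ⟨0, hd0, rfl⟩
        have he := hde _ hmem
        obtain ⟨ha, hb⟩ := hvert _ he
        simp only at ha hb
        rw [ha, hb] at he
        exact he
  · intro h l hc
    rcases h l hc with hcard | ⟨v, hv, he⟩
    · refine exists_cycle_of_out _ (Finset.card_pos.mp (by omega)) ?_
      intro w hw
      obtain ⟨hc1, hc2, hc3, hc4⟩ := hc
      have hn : 0 < l.length := List.length_pos_iff.mpr hc1
      obtain ⟨⟨u, hu, rfl⟩, hwH⟩ := mem_inducedImage_verts.mp hw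
      obtain ⟨i₀, hi₀, hui⟩ := List.mem_iff_getElem.mp hu
      obtain ⟨x, hx, hxne⟩ := Finset.exists_mem_ne hcard (φ u)
      obtain ⟨⟨u', hu', rfl⟩, hxH⟩ := mem_inducedImage_verts.mp hx
      obtain ⟨iw, hiw, hui'⟩ := List.mem_iff_getElem.mp hu'
      by_contra hcon
      push_neg at hcon
      have step : ∀ j, ∀ hj : j < l.length, φ (l[j]) = φ u →
          φ (l[(j + 1) % l.length]'(Nat.mod_lt _ hn)) = φ u := by
        intro j hj hj1
        by_contra hne'
        refine hcon (φ (l[(j + 1) % l.length]'(Nat.mod_lt _ hn))) ?_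
        have hedge : (l[j], l[(j + 1) % l.length]'(Nat.mod_lt _ hn)) ∈ G.edges :=
          hc4 _ (mem_cycEdges_iff.mpr ⟨j, hj, rfl⟩)
        have hHedge := hφ.2 _ hedge (by simpa [hj1] using fun hh => hne' hh.symm)
        rw [mem_inducedImage_edges]
        refine ⟨by simpa [hj1] using hHedge, ⟨u, hu, rfl⟩, ?_⟩
        exact ⟨_, List.getElem_mem _, rfl⟩
      have key : ∀ k, φ (l[(i₀ + k) % l.length]'(Nat.mod_lt _ hn)) = φ u := by
        intro k
        induction k with
        | zero =>
          have hidx : (i₀ + 0) % l.length = i₀ := by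
            rw [Nat.add_zero]; exact Nat.mod_eq_of_lt hi₀
          simp only [hidx]
          rw [hui]
        | succ k ih =>
          have := step _ (Nat.mod_lt _ hn) ih
          have hidx : ((i₀ + k) % l.length + 1) % l.length = (i₀ + (k + 1)) % l.length := by
            rw [Nat.mod_add_mod, ← Nat.add_assoc]
          simp only [hidx] at this
          exact this
      have hkey := key (iw + l.length - i₀)
      have hidx : (i₀ + (iw + l.length - i₀)) % l.length = iw := by
        rw [show i₀ + (iw + l.length - i₀) = iw + l.length by omega,
          Nat.add_mod_right]
        exact Nat.mod_eq_of_lt hiw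
      simp only [hidx] at hkey
      rw [hui'] at hkey
      exact hxne hkey
    · refine ⟨[v], by simp, by simp, ?_, ?_⟩
      · intro x hx
        simp only [List.mem_singleton] at hx
        subst hx
        rw [hv]
        simp
      · intro e he'
        have : cycEdges [v] = [(v, v)] := by simp [cycEdges]
        rw [this] at he'
        simp only [List.mem_singleton] at he'
        subst he'
        rw [he]
        simp
end

section
/- If G is a closed directed graph and v ∈ V(G) is a vertex not contained in any cycle, then v lies on a directed path whose initial vertex is contained in some cycle C₁ and whose final vertex is contained in some cycle C₂, with C₁ ≠ C₂. -/
variable {α β γ : Type} [DecidableEq α] [DecidableEq β] [DecidableEq γ]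

section Helpers

set_option linter.unusedSectionVars false

lemma zipWrap {E : α → α → Prop} : ∀ (l : List α) (b a : α),
    (∀ e ∈ (b :: l).zip (l ++ [a]), E e.1 e.2) ↔
      (List.Chain' E (b :: l) ∧ E ((b :: l).getLast (by simp)) a) := by
  intro l
  induction l with
  | nil => intro b a; simp [List.Chain']
  | cons c t ih =>
      intro b a
      rw [show ((c :: t) ++ [a]) = c :: (t ++ [a]) by simp, List.zip_cons_cons]
      rw [List.Chain', List.isChain_cons_cons, List.getLast_cons (by simp)]
      constructor
      · intro h
        have h1 := h (b, c) (by simp)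
        have h2 := (ih c a).mp (fun e he => h e (by simp [he]))
        exact ⟨⟨h1, h2.1⟩, h2.2⟩
      · rintro ⟨⟨h1, h2⟩, h3⟩ e he
        rcases List.mem_cons.mp he with rfl | he
        · exact h1
        · exact ((ih c a).mpr ⟨h2, h3⟩) e he

lemma cycEdges_cons_iff {E : α → α → Prop} (a : α) (l : List α) :
    (∀ e ∈ cycEdges (a :: l), E e.1 e.2) ↔
      (List.Chain' E (a :: l) ∧ E ((a :: l).getLast (by simp)) a) := by
  rw [cycEdges, List.rotate_cons_succ, List.rotate_zero]
  exact zipWrap l a a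

/-- Characterization of cycles in terms of `Chain'` plus the wrap edge. -/
lemma isCycle_cons_iff (G : FinDigraph α) (a : α) (l : List α) :
    G.IsCycle (a :: l) ↔ (a :: l).Nodup ∧ (∀ v ∈ a :: l, v ∈ G.verts) ∧
      List.Chain' (fun u w => (u, w) ∈ G.edges) (a :: l) ∧
      ((a :: l).getLast (by simp), a) ∈ G.edges := by
  unfold FinDigraph.IsCycle
  rw [show (∀ e ∈ cycEdges (a :: l), e ∈ G.edges) ↔ _ from
        cycEdges_cons_iff (E := fun u w => (u, w) ∈ G.edges) a l]
  tauto

/-- Glue two internally-disjoint paths `s → e` and `e → s` into a cycle. -/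
lemma glue_cycle (G : FinDigraph α) {s e : α} {m q : List α}
    (hcm : List.Chain' (fun u w => (u, w) ∈ G.edges) (s :: m ++ [e]))
    (hcq : List.Chain' (fun u w => (u, w) ∈ G.edges) (e :: q ++ [s]))
    (hnm : (s :: m ++ [e]).Nodup) (hnq : (e :: q ++ [s]).Nodup)
    (hvm : ∀ z ∈ s :: m ++ [e], z ∈ G.verts) (hvq : ∀ z ∈ e :: q, z ∈ G.verts)
    (hdisj : ∀ z ∈ s :: m, z ∉ e :: q) :
    G.IsCycle (s :: m ++ e :: q) := by
  have hm1 : List.Chain' (fun u w => (u, w) ∈ G.edges) (s :: m) ∧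
      ((s :: m).getLast (by simp), e) ∈ G.edges := by
    rw [List.Chain', List.isChain_append] at hcm
    refine ⟨hcm.1, hcm.2.2 ((s :: m).getLast (by simp)) ?_ e (by simp)⟩
    rw [List.getLast?_eq_getLast (by simp)]; rfl
  have hq1 : List.Chain' (fun u w => (u, w) ∈ G.edges) (e :: q) ∧
      ((e :: q).getLast (by simp), s) ∈ G.edges := by
    rw [List.Chain', List.isChain_append] at hcq
    refine ⟨hcq.1, hcq.2.2 ((e :: q).getLast (by simp)) ?_ s (by simp)⟩
    rw [List.getLast?_eq_getLast (by simp)]; rfl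
  rw [show (s :: m ++ e :: q) = s :: (m ++ e :: q) by simp, isCycle_cons_iff]
  have hL : s :: (m ++ e :: q) = (s :: m) ++ (e :: q) := by simp
  refine ⟨?_, ?_, ?_, ?_⟩
  · rw [hL, List.nodup_append]
    refine ⟨(List.sublist_append_left _ [e]).nodup (by simpa using hnm), ?_, ?_⟩
    · exact (List.sublist_append_left _ [s]).nodup (by simpa using hnq)
    · rintro x hx _ hx' rfl; exact hdisj x hx hx'
  · intro z hz
    rw [hL, List.mem_append] at hz
    rcases hz with hz | hz
    · exact hvm z (by simp at hz ⊢; tauto)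
    · exact hvq z hz
  · rw [hL, List.Chain', List.isChain_append]
    refine ⟨hm1.1, hq1.1, ?_⟩
    intro x hx y hy
    rw [List.getLast?_eq_getLast (by simp)] at hx
    simp only [List.head?_cons, Option.mem_def, Option.some.injEq] at hx hy
    cases hx; cases hy
    exact hm1.2
  · have h1 : (s :: (m ++ e :: q)).getLast (by simp) = (e :: q).getLast (by simp) :=
      List.getLast_append_of_ne_nil (l := s :: m) (l' := e :: q) (by simp) (by simp)
    rw [h1]
    exact hq1.2

lemma first_split {P : α → Prop} (l : List α) (hl : ∃ x ∈ l, P x) :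
    ∃ l₁ z l₂, l = l₁ ++ z :: l₂ ∧ P z ∧ ∀ w ∈ l₁, ¬ P w := by
  induction l with
  | nil => simp at hl
  | cons a t ih =>
    by_cases ha : P a
    · exact ⟨[], a, t, rfl, ha, by simp⟩
    · obtain ⟨x, hx, hPx⟩ := hl
      rcases List.mem_cons.mp hx with rfl | hx
      · exact absurd hPx ha
      obtain ⟨l₁, z, l₂, rfl, h1, h2⟩ := ih ⟨x, hx, hPx⟩
      refine ⟨a :: l₁, z, l₂, rfl, h1, ?_⟩
      rintro w hw
      rcases List.mem_cons.mp hw with rfl | hw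
      · exact ha
      · exact h2 w hw

/-- A path whose last vertex has an edge back to its first vertex is a cycle. -/
lemma path_wrap_cycle (G : FinDigraph α) {p : List α} (hp : G.IsPath p)
    (hw : (p.getLast hp.1, p.head hp.1) ∈ G.edges) : G.IsCycle p := by
  obtain ⟨hne, hnd, hvt, hch⟩ := hp
  rcases p with _ | ⟨a, l⟩
  · exact absurd rfl hne
  rw [isCycle_cons_iff]
  exact ⟨hnd, hvt, hch, by simpa using hw⟩

lemma path_length_le (G : FinDigraph α) {p : List α} (hp : G.IsPath p) :
    p.length ≤ G.verts.card := by
  rw [← List.toFinset_card_of_nodup hp.2.1]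
  exact Finset.card_le_card (fun x hx => hp.2.2.1 x (List.mem_toFinset.mp hx))

/-- Rotating a cycle gives a cycle. -/
lemma isCycle_rotate (G : FinDigraph α) {u w : List α} (h : G.IsCycle (u ++ w))
    (hw : w ≠ []) : G.IsCycle (w ++ u) := by
  rcases u with _ | ⟨a, u'⟩
  · simpa using h
  rcases w with _ | ⟨b, w'⟩
  · exact absurd rfl hw
  rw [show (a :: u') ++ (b :: w') = a :: (u' ++ b :: w') from rfl, isCycle_cons_iff] at h
  obtain ⟨hnd, hvt, hch, hwrap⟩ := h
  have hsplit := (List.isChain_append (l₁ := a :: u') (l₂ := b :: w')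
      (R := fun x y => (x, y) ∈ G.edges)).mp hch
  rw [show (b :: w') ++ (a :: u') = b :: (w' ++ a :: u') from rfl, isCycle_cons_iff]
  refine ⟨?_, ?_, ?_, ?_⟩
  · exact (List.perm_append_comm (l₁ := a :: u') (l₂ := b :: w')).nodup_iff.mp hnd
  · intro z hz; apply hvt z; simp at hz ⊢; tauto
  · refine (List.isChain_append (l₁ := b :: w') (l₂ := a :: u')).mpr
      ⟨hsplit.2.1, hsplit.1, ?_⟩
    intro x hx y hy
    rw [List.getLast?_eq_getLast (by simp)] at hx
    simp only [List.head?_cons, Option.mem_def, Option.some.injEq] at hx hy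
    cases hx; cases hy
    have h1 : (a :: (u' ++ b :: w')).getLast (by simp) = (b :: w').getLast (by simp) :=
      List.getLast_append_of_ne_nil (l := a :: u') (l' := b :: w') (by simp) (by simp)
    rw [h1] at hwrap
    exact hwrap
  · have h2 : (b :: (w' ++ a :: u')).getLast (by simp) = (a :: u').getLast (by simp) :=
      List.getLast_append_of_ne_nil (l := b :: w') (l' := a :: u') (by simp) (by simp)
    rw [h2]
    have := hsplit.2.2 ((a :: u').getLast (by simp))
      (by rw [List.getLast?_eq_getLast (by simp)]; rfl) b (by simp)
    exact this

/-- An arc of a cycle is a path within the cycle. -/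
lemma cycle_arc (G : FinDigraph α) {c : List α} (hc : G.IsCycle c) {y x : α}
    (hy : y ∈ c) (hx : x ∈ c) :
    ∃ q, G.IsPath q ∧ q.head? = some y ∧ q.getLast? = some x ∧ ∀ z ∈ q, z ∈ c := by
  obtain ⟨c₁, c₂, rfl⟩ := List.append_of_mem hy
  have hc' : G.IsCycle ((y :: c₂) ++ c₁) := isCycle_rotate G hc (by simp)
  have hx' : x ∈ (y :: c₂) ++ c₁ := by simp at hx ⊢; tauto
  obtain ⟨d₁, d₂, hd⟩ := List.append_of_mem hx'
  obtain ⟨hne', hnd', hvt', hce'⟩ := hc'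
  have hch' : List.Chain' (fun u w => (u, w) ∈ G.edges) ((y :: c₂) ++ c₁) :=
    ((cycEdges_cons_iff (E := fun u w => (u, w) ∈ G.edges) y (c₂ ++ c₁)).mp hce').1
  have hpre : (d₁ ++ [x]) <+: ((y :: c₂) ++ c₁) := ⟨d₂, by rw [hd]; simp⟩
  refine ⟨d₁ ++ [x], ⟨by simp, hpre.sublist.nodup hnd',
      fun z hz => hvt' z (hpre.sublist.mem hz), hch'.prefix hpre⟩, ?_, by simp, ?_⟩
  · have h0 := congrArg List.head? hd
    rcases d₁ with _ | ⟨a, d₁'⟩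
    · simp at h0 ⊢; exact h0.symm
    · simp at h0 ⊢; exact h0.symm
  · intro z hz
    have := hpre.sublist.mem hz
    simp at this hx ⊢; tauto

lemma path_last_cycle (G : FinDigraph α) {p : List α} (hp : G.IsPath p) {r : α}
    (hrp : r ∈ p) (hr : (p.getLast hp.1, r) ∈ G.edges) :
    ∃ c, G.IsCycle c ∧ p.getLast hp.1 ∈ c := by
  obtain ⟨p₁, p₂, rfl⟩ := List.append_of_mem hrp
  have hglp : (p₁ ++ r :: p₂).getLast hp.1 = (r :: p₂).getLast (by simp) :=
    List.getLast_append_of_ne_nil _ (by simp)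
  have hsuff : (r :: p₂) <:+ (p₁ ++ r :: p₂) := ⟨p₁, rfl⟩
  have hpath : G.IsPath (r :: p₂) := ⟨by simp, hsuff.sublist.nodup hp.2.1,
    fun z hz => hp.2.2.1 z (hsuff.sublist.mem hz), hp.2.2.2.infix hsuff.isInfix⟩
  refine ⟨r :: p₂, path_wrap_cycle G hpath ?_, ?_⟩
  · rw [hglp] at hr
    exact hr
  · rw [hglp]
    exact List.getLast_mem _

lemma path_head_cycle (G : FinDigraph α) {p : List α} (hp : G.IsPath p) {r : α}
    (hrp : r ∈ p) (hr : (r, p.head hp.1) ∈ G.edges) :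
    ∃ c, G.IsCycle c ∧ p.head hp.1 ∈ c := by
  obtain ⟨p₁, p₂, rfl⟩ := List.append_of_mem hrp
  have hpre : (p₁ ++ [r]) <+: (p₁ ++ r :: p₂) := ⟨p₂, by simp⟩
  have hhead : (p₁ ++ [r]).head (by simp) = (p₁ ++ r :: p₂).head hp.1 := by
    rcases p₁ with _ | ⟨a, p₁'⟩ <;> rfl
  have hpath : G.IsPath (p₁ ++ [r]) := ⟨by simp, hpre.sublist.nodup hp.2.1,
    fun z hz => hp.2.2.1 z (hpre.sublist.mem hz), hp.2.2.2.prefix hpre⟩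
  have hgl : (p₁ ++ [r]).getLast (by simp) = r := by
    rw [List.getLast_append_of_ne_nil (l := p₁) (l' := [r]) _ (by simp)]
    rfl
  refine ⟨p₁ ++ [r], path_wrap_cycle G hpath ?_, ?_⟩
  · rw [hgl, hhead]
    exact hr
  · rw [← hhead]
    exact List.head_mem _

lemma path_extend (G : FinDigraph α) {p : List α} (hp : G.IsPath p) {r : α}
    (hrp : r ∉ p) (hr : (p.getLast hp.1, r) ∈ G.edges) : G.IsPath (p ++ [r]) := by
  refine ⟨by simp, ?_, ?_, ?_⟩
  · rw [List.nodup_append]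
    refine ⟨hp.2.1, List.nodup_singleton r, ?_⟩
    rintro a ha _ har rfl
    simp at har
    subst har
    exact hrp ha
  · intro z hz
    rcases List.mem_append.mp hz with hz | hz
    · exact hp.2.2.1 z hz
    · simp at hz
      exact hz ▸ (G.edge_mem _ hr).2
  · rw [List.Chain', List.isChain_append]
    refine ⟨hp.2.2.2, List.isChain_singleton r, ?_⟩
    intro x hx y hy
    rw [List.getLast?_eq_getLast hp.1] at hx
    simp only [Option.mem_def, Option.some.injEq, List.head?_cons] at hx hy
    cases hx; cases hy
    exact hr

lemma path_prepend (G : FinDigraph α) {p : List α} (hp : G.IsPath p) {r : α}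
    (hrp : r ∉ p) (hr : (r, p.head hp.1) ∈ G.edges) : G.IsPath (r :: p) := by
  refine ⟨by simp, by simp [hp.2.1, hrp], ?_, ?_⟩
  · intro z hz
    rcases List.mem_cons.mp hz with rfl | hz
    · exact (G.edge_mem _ hr).1
    · exact hp.2.2.1 z hz
  · rw [List.Chain', List.isChain_cons]
    refine ⟨?_, hp.2.2.2⟩
    intro y hy
    rw [List.head?_eq_head hp.1] at hy
    simp only [Option.mem_def, Option.some.injEq] at hy
    cases hy
    exact hr

lemma exists_forward (G : FinDigraph α) (h : G.Closed) (v : α) (hv : v ∈ G.verts) :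
    ∃ p, ∃ hp : G.IsPath p, p.head? = some v ∧
      ∃ c, G.IsCycle c ∧ ∃ w, p.getLast? = some w ∧ w ∈ c := by
  suffices H : ∀ n (p : List α), ∀ hp : G.IsPath p, G.verts.card ≤ p.length + n →
      ∃ q, ∃ hq : G.IsPath q, q.head? = p.head? ∧
        ∃ c, G.IsCycle c ∧ ∃ w, q.getLast? = some w ∧ w ∈ c by
    obtain ⟨q, hq, h1, h2⟩ := H G.verts.card [v] ⟨by simp, by simp, by simpa, by simp [List.Chain']⟩
      (by simp)
    exact ⟨q, hq, by simpa using h1, h2⟩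
  intro n
  induction n with
  | zero =>
    intro p hp hcard
    obtain ⟨r, hr⟩ := (h _ (hp.2.2.1 _ (List.getLast_mem hp.1))).2
    have hrp : r ∈ p := by
      by_contra hrp
      have hlen := path_length_le G (path_extend G hp hrp hr)
      simp at hlen
      omega
    obtain ⟨c, hc, hmem⟩ := path_last_cycle G hp hrp hr
    exact ⟨p, hp, rfl, c, hc, p.getLast hp.1, List.getLast?_eq_getLast hp.1, hmem⟩
  | succ n ih =>
    intro p hp hcard
    obtain ⟨r, hr⟩ := (h _ (hp.2.2.1 _ (List.getLast_mem hp.1))).2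
    by_cases hrp : r ∈ p
    · obtain ⟨c, hc, hmem⟩ := path_last_cycle G hp hrp hr
      exact ⟨p, hp, rfl, c, hc, p.getLast hp.1, List.getLast?_eq_getLast hp.1, hmem⟩
    · obtain ⟨q, hq, h1, h2⟩ := ih (p ++ [r]) (path_extend G hp hrp hr) (by simp; omega)
      refine ⟨q, hq, ?_, h2⟩
      rw [h1]
      rcases p with _ | ⟨a, p'⟩
      · exact absurd rfl hp.1
      · rfl

lemma exists_backward (G : FinDigraph α) (h : G.Closed) (v : α) (hv : v ∈ G.verts) :
    ∃ p, ∃ hp : G.IsPath p, p.getLast? = some v ∧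
      ∃ c, G.IsCycle c ∧ ∃ u, p.head? = some u ∧ u ∈ c := by
  suffices H : ∀ n (p : List α), ∀ hp : G.IsPath p, G.verts.card ≤ p.length + n →
      ∃ q, ∃ hq : G.IsPath q, q.getLast? = p.getLast? ∧
        ∃ c, G.IsCycle c ∧ ∃ u, q.head? = some u ∧ u ∈ c by
    obtain ⟨q, hq, h1, h2⟩ := H G.verts.card [v] ⟨by simp, by simp, by simpa, by simp [List.Chain']⟩
      (by simp)
    exact ⟨q, hq, by simpa using h1, h2⟩
  intro n
  induction n with
  | zero =>
    intro p hp hcard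
    obtain ⟨r, hr⟩ := (h _ (hp.2.2.1 _ (List.head_mem hp.1))).1
    have hrp : r ∈ p := by
      by_contra hrp
      have hlen := path_length_le G (path_prepend G hp hrp hr)
      simp at hlen
      omega
    obtain ⟨c, hc, hmem⟩ := path_head_cycle G hp hrp hr
    exact ⟨p, hp, rfl, c, hc, p.head hp.1, List.head?_eq_head hp.1, hmem⟩
  | succ n ih =>
    intro p hp hcard
    obtain ⟨r, hr⟩ := (h _ (hp.2.2.1 _ (List.head_mem hp.1))).1
    by_cases hrp : r ∈ p
    · obtain ⟨c, hc, hmem⟩ := path_head_cycle G hp hrp hr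
      exact ⟨p, hp, rfl, c, hc, p.head hp.1, List.head?_eq_head hp.1, hmem⟩
    · obtain ⟨q, hq, h1, h2⟩ := ih (r :: p) (path_prepend G hp hrp hr) (by simp; omega)
      refine ⟨q, hq, ?_, h2⟩
      rw [h1, List.getLast?_eq_getLast (by simp), List.getLast?_eq_getLast hp.1,
        List.getLast_cons hp.1]

end Helpers

/-- in a closed digraph, a vertex lying on no cycle lies on a
directed path whose initial and final vertices lie on two distinct cycles. -/
theorem closed_vertex_not_on_cycle (G : FinDigraph α) (h : G.Closed)
    (v : α) (hv : v ∈ G.verts) (hnc : ∀ c, G.IsCycle c → v ∉ c) :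
    ∃ p, ∃ hp : G.IsPath p, v ∈ p ∧
      ∃ c₁ c₂, G.IsCycle c₁ ∧ G.IsCycle c₂ ∧ cycleGraph c₁ ≠ cycleGraph c₂ ∧
        p.head hp.1 ∈ c₁ ∧ p.getLast hp.1 ∈ c₂ := by
  obtain ⟨p₁, hp₁, hlast₁, c₁, hc₁, u₁, hhead₁, hu₁⟩ := exists_backward G h v hv
  obtain ⟨p₂, hp₂, hhead₂, c₂, hc₂, u₂, hlast₂, hu₂⟩ := exists_forward G h v hv
  have hu₁v : u₁ ≠ v := fun hh => hnc c₁ hc₁ (hh ▸ hu₁)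
  have hu₂v : u₂ ≠ v := fun hh => hnc c₂ hc₂ (hh ▸ hu₂)
  -- p₂ = v :: t
  obtain ⟨t, rfl⟩ : ∃ t, p₂ = v :: t := by
    rcases p₂ with _ | ⟨a, t⟩
    · exact absurd rfl hp₂.1
    · simp only [List.head?_cons, Option.some.injEq] at hhead₂
      exact ⟨t, by rw [hhead₂]⟩
  have hvlast₁ : p₁.getLast hp₁.1 = v := by
    rw [List.getLast?_eq_getLast hp₁.1] at hlast₁
    exact Option.some.inj hlast₁
  have hvp₁ : v ∈ p₁ := hvlast₁ ▸ List.getLast_mem hp₁.1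
  have hvt : v ∉ t := by
    have := hp₂.2.1
    simp at this
    exact this.1
  -- the two paths meet only in v
  have hint : ∀ z ∈ p₁, z ∈ v :: t → z = v := by
    intro z hz1 hz2
    by_contra hzv
    have hzt : z ∈ t := by
      rcases List.mem_cons.mp hz2 with rfl | hzt
      · exact absurd rfl hzv
      · exact hzt
    obtain ⟨t₁, z', t₂, ht, hz'p₁, ht₁⟩ :=
      first_split (P := fun w => w ∈ p₁) t ⟨z, hzt, hz1⟩
    have hz'v : z' ≠ v := fun hh => hvt (hh ▸ ht ▸ (by simp))
    obtain ⟨q₁, q₂, hq⟩ := List.append_of_mem hz'p₁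
    have hq₂ne : q₂ ≠ [] := by
      rintro rfl
      apply hz'v
      have h0 := hlast₁
      rw [hq, List.getLast?_append_of_ne_nil q₁ (by simp)] at h0
      simpa using h0
    have hglq₂' : q₂.getLast? = some v := by
      have h0 := hlast₁
      rw [hq, List.getLast?_append_of_ne_nil q₁ (by simp),
        show (z' :: q₂).getLast? = ([z'] ++ q₂).getLast? from rfl,
        List.getLast?_append_of_ne_nil [z'] (l₂ := q₂) hq₂ne] at h0
      exact h0
    have hglq₂ : q₂.getLast hq₂ne = v := by
      rw [List.getLast?_eq_getLast hq₂ne] at hglq₂'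
      exact Option.some.inj hglq₂'
    have hq₂ : q₂.dropLast ++ [v] = q₂ := by
      conv_rhs => rw [← List.dropLast_append_getLast hq₂ne]
      rw [hglq₂]
    -- glue into a cycle through v
    have hcyc := glue_cycle G (s := v) (m := t₁) (e := z') (q := q₂.dropLast)
      (by
        apply hp₂.2.2.2.prefix
        exact ⟨t₂, by rw [ht]; simp⟩)
      (by
        rw [show z' :: q₂.dropLast ++ [v] = z' :: q₂ by rw [← hq₂]; simp]
        apply hp₁.2.2.2.infix
        exact ⟨q₁, [], by rw [hq]; simp⟩)
      (by
        have : (v :: t₁ ++ [z']) <+: (v :: t) := ⟨t₂, by rw [ht]; simp⟩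
        exact this.sublist.nodup hp₂.2.1)
      (by
        rw [show z' :: q₂.dropLast ++ [v] = z' :: q₂ by rw [← hq₂]; simp]
        have : (z' :: q₂) <:+ p₁ := ⟨q₁, hq.symm⟩
        exact this.sublist.nodup hp₁.2.1)
      (by
        intro z hz
        apply hp₂.2.2.1
        have : (v :: t₁ ++ [z']) <+: (v :: t) := ⟨t₂, by rw [ht]; simp⟩
        exact this.sublist.mem hz)
      (by
        intro z hz
        apply hp₁.2.2.1
        have h1 : List.Sublist (z' :: q₂.dropLast) (z' :: q₂) :=
          (List.dropLast_sublist q₂).cons₂ z'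
        have h2 : (z' :: q₂) <:+ p₁ := ⟨q₁, hq.symm⟩
        exact h2.sublist.mem (h1.mem hz))
      (by
        intro z hz hz'
        have hnodq : (z' :: q₂).Nodup := (List.IsSuffix.sublist ⟨q₁, hq.symm⟩).nodup hp₁.2.1
        have hsub : ∀ w ∈ z' :: q₂.dropLast, w ∈ p₁ := by
          intro w hw
          have h1 : List.Sublist (z' :: q₂.dropLast) (z' :: q₂) :=
            (List.dropLast_sublist q₂).cons₂ z'
          exact (List.IsSuffix.sublist ⟨q₁, hq.symm⟩).mem (h1.mem hw)
        rcases List.mem_cons.mp hz with rfl | hzt₁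
        · -- z = v : but v ∉ z' :: q₂.dropLast
          have hok : (z' :: (q₂.dropLast ++ [z])).Nodup := by rw [hq₂]; exact hnodq
          rw [List.nodup_cons, List.nodup_append] at hok
          rcases List.mem_cons.mp hz' with hzz' | hzq
          · exact hz'v hzz'.symm
          · exact hok.2.2.2 z hzq z (by simp) rfl
        · exact ht₁ z hzt₁ (hsub z hz')
      )
    exact hnc _ hcyc (by simp)
  -- t is nonempty
  have htne : t ≠ [] := by
    rintro rfl
    apply hu₂v
    simpa using hlast₂.symm
  -- the concatenated path
  have hlink : ∀ y ∈ t.head?, (v, y) ∈ G.edges := by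
    have := hp₂.2.2.2
    rw [List.Chain', List.isChain_cons] at this
    exact this.1
  have hP : G.IsPath (p₁ ++ t) := by
    refine ⟨by simp [hp₁.1], ?_, ?_, ?_⟩
    · rw [List.nodup_append]
      refine ⟨hp₁.2.1, (List.nodup_cons.mp hp₂.2.1).2, ?_⟩
      rintro a ha _ hat rfl
      exact hvt ((hint a ha (by simp [hat])) ▸ hat)
    · intro z hz
      rcases List.mem_append.mp hz with hz | hz
      · exact hp₁.2.2.1 z hz
      · exact hp₂.2.2.1 z (by simp [hz])
    · rw [List.Chain', List.isChain_append]
      refine ⟨hp₁.2.2.2, (List.isChain_cons.mp hp₂.2.2.2).2, ?_⟩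
      intro a ha y hy
      rw [List.getLast?_eq_getLast hp₁.1, hvlast₁] at ha
      simp only [Option.mem_def, Option.some.injEq] at ha
      cases ha
      exact hlink y hy
  have hu₁head : p₁.head hp₁.1 = u₁ := by
    rw [List.head?_eq_head hp₁.1] at hhead₁
    exact Option.some.inj hhead₁
  have hheadP : (p₁ ++ t).head hP.1 = u₁ := by
    rw [← hu₁head]
    rcases p₁ with _ | ⟨a, l⟩
    · exact absurd rfl hp₁.1
    · rfl
  have hu₂last : t.getLast htne = u₂ := by
    have : (v :: t).getLast (by simp) = u₂ := by
      rw [List.getLast?_eq_getLast (by simp)] at hlast₂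
      exact Option.some.inj hlast₂
    rw [← this, List.getLast_cons htne]
  have hlastP : (p₁ ++ t).getLast hP.1 = u₂ := by
    rw [List.getLast_append_of_ne_nil _ htne]
    exact hu₂last
  have hvP : v ∈ p₁ ++ t := List.mem_append.mpr (Or.inl hvp₁)
  -- distinctness of the two cycle graphs
  have hdc : cycleGraph c₁ ≠ cycleGraph c₂ := by
    intro heq
    have hverts : c₁.toFinset = c₂.toFinset := congrArg FinDigraph.verts heq
    have hu₁c₂ : u₁ ∈ c₂ := by
      rw [← List.mem_toFinset, ← hverts, List.mem_toFinset]
      exact hu₁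
    have hvnc₂ : v ∉ c₂ := hnc c₂ hc₂
    -- split the path at v
    obtain ⟨r₁, r₂, hsplit⟩ := List.append_of_mem hvP
    have hheadP? : (p₁ ++ t).head? = some u₁ := by
      rw [List.head?_eq_head hP.1, hheadP]
    have hlastP? : (p₁ ++ t).getLast? = some u₂ := by
      rw [List.getLast?_eq_getLast hP.1, hlastP]
    have hr₁ne : r₁ ≠ [] := by
      rintro rfl
      apply hu₁v
      have h0 := hheadP?
      rw [hsplit] at h0
      have : v = u₁ := by simpa using h0
      exact this.symm
    have hheadr₁ : r₁.head hr₁ne = u₁ := by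
      have h0 := hheadP?
      rw [hsplit] at h0
      rcases r₁ with _ | ⟨a, l⟩
      · exact absurd rfl hr₁ne
      · simpa using h0
    have hr₂ne : r₂ ≠ [] := by
      rintro rfl
      apply hu₂v
      have h0 := hlastP?
      rw [hsplit, List.getLast?_append_of_ne_nil r₁ (l₂ := [v]) (by simp)] at h0
      have : v = u₂ := by simpa using h0
      exact this.symm
    have hlastr₂ : r₂.getLast hr₂ne = u₂ := by
      have h0 := hlastP?
      rw [hsplit, List.getLast?_append_of_ne_nil r₁ (l₂ := v :: r₂) (by simp),
        show (v :: r₂).getLast? = ([v] ++ r₂).getLast? from rfl,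
        List.getLast?_append_of_ne_nil [v] (l₂ := r₂) hr₂ne,
        List.getLast?_eq_getLast hr₂ne] at h0
      exact Option.some.inj h0
    -- last c₂-vertex in r₁
    obtain ⟨l₁, x, l₂, hrev, hxc₂, hl₁⟩ := first_split (P := fun w => w ∈ c₂) r₁.reverse
      ⟨u₁, by rw [List.mem_reverse, ← hheadr₁]; exact List.head_mem hr₁ne, hu₁c₂⟩
    have hr₁eq : r₁ = l₂.reverse ++ x :: l₁.reverse := by
      rw [← List.reverse_reverse r₁, hrev]
      simp
    -- first c₂-vertex in r₂
    obtain ⟨b₁, y, b₂, hr₂eq, hyc₂, hb₁⟩ := first_split (P := fun w => w ∈ c₂) r₂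
      ⟨u₂, hlastr₂ ▸ List.getLast_mem hr₂ne, hu₂⟩
    -- the arc of c₂ from y to x
    obtain ⟨q, hq, hqh, hql, hqc₂⟩ := cycle_arc G hc₂ hyc₂ hxc₂
    obtain ⟨q', rfl⟩ : ∃ q', q = y :: q' := by
      rcases q with _ | ⟨a, q'⟩
      · exact absurd rfl hq.1
      · simp only [List.head?_cons, Option.some.injEq] at hqh
        exact ⟨q', by rw [hqh]⟩
    have hxy : x ≠ y := by
      intro hh
      have hx1 : x ∈ r₁ := by rw [hr₁eq]; simp
      have hy1 : y ∈ r₂ := by rw [hr₂eq]; simp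
      have := hP.2.1
      rw [hsplit, List.nodup_append] at this
      exact this.2.2 x hx1 x (by simp [hh, hy1]) rfl
    have hq'ne : q' ≠ [] := by
      rintro rfl
      apply hxy
      rw [List.getLast?_eq_getLast (by simp)] at hql
      simpa using (Option.some.inj hql).symm
    have hq'eq : q'.dropLast ++ [x] = q' := by
      conv_rhs => rw [← List.dropLast_append_getLast hq'ne]
      congr 1
      rw [List.getLast?_eq_getLast (by simp)] at hql
      have := Option.some.inj hql
      rw [List.getLast_cons hq'ne] at this
      rw [this]
    -- glue the path segment x → y with the arc y → x
    have hminf : (x :: (l₁.reverse ++ v :: b₁) ++ [y]) <:+: (p₁ ++ t) :=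
      ⟨l₂.reverse, b₂, by rw [hsplit, hr₁eq, hr₂eq]; simp⟩
    have hcyc := glue_cycle G (s := x) (m := l₁.reverse ++ v :: b₁) (e := y)
      (q := q'.dropLast)
      (hP.2.2.2.infix hminf)
      (by
        rw [show y :: q'.dropLast ++ [x] = y :: q' by rw [← hq'eq]; simp]
        exact hq.2.2.2)
      (hminf.sublist.nodup hP.2.1)
      (by
        rw [show y :: q'.dropLast ++ [x] = y :: q' by rw [← hq'eq]; simp]
        exact hq.2.1)
      (fun z hz => hP.2.2.1 z (hminf.sublist.mem hz))
      (by
        intro z hz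
        apply hq.2.2.1
        have h1 : List.Sublist (y :: q'.dropLast) (y :: q') :=
          (List.dropLast_sublist q').cons₂ y
        exact h1.mem hz)
      (by
        intro z hz hz'
        have hzc₂ : z ∈ c₂ := by
          apply hqc₂
          have h1 : List.Sublist (y :: q'.dropLast) (y :: q') :=
            (List.dropLast_sublist q').cons₂ y
          exact h1.mem hz'
        rcases List.mem_cons.mp hz with rfl | hz
        · -- z = x : x ∉ y :: q'.dropLast since (y :: q') nodup ends in x
          have hnq : (y :: (q'.dropLast ++ [z])).Nodup := by rw [hq'eq]; exact hq.2.1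
          rw [List.nodup_cons, List.nodup_append] at hnq
          rcases List.mem_cons.mp hz' with hzy | hzq
          · exact hnq.1 (by simp [hzy])
          · exact hnq.2.2.2 z hzq z (by simp) rfl
        · rcases List.mem_append.mp hz with hz | hz
          · exact hl₁ z (by rwa [← List.mem_reverse]) hzc₂
          · rcases List.mem_cons.mp hz with rfl | hz
            · exact hvnc₂ hzc₂
            · exact hb₁ z hz hzc₂)
    exact hnc _ hcyc (by simp)
  exact ⟨p₁ ++ t, hP, hvP, c₁, c₂, hc₁, hc₂, hdc, hheadP ▸ hu₁, hlastP ▸ hu₂⟩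
end
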